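/- arXiv:1712.01342 — 2 statements merged into one kernel-verified Lean document; each statement's English description precedes it below -/
import Mathlib

section
/- Let 0<γ≤1, let y ∈ ℝⁿ and r>0, and let f⃗=(f₁,f₂,…) be a sequence of locally integrable functions on ℝⁿ; set f_j^∞ = f_j·χ_{B(y,2r)^c}. Then there is a constant C>0, independent of f⃗, y, r, such that for every x ∈ B(y,r), ( Σ_{j=1}^∞ |S_γ(f_j^∞)(x)|² )^{1/2} ≤ C Σ_{l=1}^∞ (1/|B(y,2^{l+1}r)|) ∫_{B(y,2^{l+1}r)} ( Σ_{j=1}^∞ |f_j(z)|² )^{1/2} dz. -/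
open MeasureTheory Metric Set
open scoped ENNReal NNReal Real

noncomputable section

/-- Euclidean space `ℝⁿ`. -/
abbrev En (n : ℕ) := EuclideanSpace ℝ (Fin n)

/-- The weighted measure `w(s) = ∫_s w` of a set. -/
def wMeas {n : ℕ} (w : En n → ℝ) (s : Set (En n)) : ℝ≥0∞ :=
  ∫⁻ x in s, ENNReal.ofReal (w x)

/-- A weight: a positive locally integrable function. -/
def IsWeight {n : ℕ} (w : En n → ℝ) : Prop :=
  LocallyIntegrable w volume ∧ ∀ x, 0 < w x

/-- Average of a weight over a ball (lower-integral version). -/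
def ballAvg {n : ℕ} (w : En n → ℝ) (y : En n) (r : ℝ) : ℝ≥0∞ :=
  wMeas w (ball y r) / volume (ball y r)

/-- The Muckenhoupt class `A_p`, `1 < p < ∞`. -/
def IsAp {n : ℕ} (w : En n → ℝ) (p : ℝ) : Prop :=
  IsWeight w ∧ ∃ C : ℝ, 0 < C ∧ ∀ (y : En n) (r : ℝ), 0 < r →
    (ballAvg w y r) ^ (1 / p) *
      (ballAvg (fun x => w x ^ (-(1 / (p - 1)))) y r) ^ (1 - 1 / p) ≤ ENNReal.ofReal C

/-- The Muckenhoupt class `A₁`. -/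
def IsA1 {n : ℕ} (w : En n → ℝ) : Prop :=
  IsWeight w ∧ ∃ C : ℝ, 0 < C ∧ ∀ (y : En n) (r : ℝ), 0 < r →
    ballAvg w y r ≤ ENNReal.ofReal C *
      ENNReal.ofReal (essInf w (volume.restrict (ball y r)))

/-- `A_∞ = ⋃_{1 ≤ p < ∞} A_p`. -/
def IsAinfty {n : ℕ} (w : En n → ℝ) : Prop :=
  IsA1 w ∨ ∃ p : ℝ, 1 < p ∧ IsAp w p

/-- The doubling class `Δ₂`: `μ(2B) ≤ C μ(B)` for all balls. -/
def IsDoubling {n : ℕ} (μ : En n → ℝ) : Prop :=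
  IsWeight μ ∧ ∃ C : ℝ, 0 < C ∧ ∀ (y : En n) (r : ℝ), 0 < r →
    wMeas μ (ball y (2 * r)) ≤ ENNReal.ofReal C * wMeas μ (ball y r)

/-- The family `C_γ` of kernels: supported in the unit ball, mean zero,
`γ`-Hölder with constant 1. -/
def Cfam (n : ℕ) (γ : ℝ) : Set (En n → ℝ) :=
  {φ | Function.support φ ⊆ closedBall 0 1 ∧ (∫ x, φ x) = 0 ∧
    ∀ x x' : En n, |φ x - φ x'| ≤ ‖x - x'‖ ^ γ}

/-- `L¹` dilation `φ_t(y) = t^{-n} φ(y/t)`. -/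
def dil {n : ℕ} (φ : En n → ℝ) (t : ℝ) (y : En n) : ℝ :=
  t ^ (-(n : ℝ)) * φ (t⁻¹ • y)

/-- `A_γ(f)(y,t) = sup_{φ ∈ C_γ} |φ_t * f(y)|`. -/
def Agamma {n : ℕ} (γ : ℝ) (f : En n → ℝ) (y : En n) (t : ℝ) : ℝ :=
  ⨆ φ ∈ Cfam n γ, |∫ z, dil φ t (y - z) * f z|

/-- Square integral of `F(y,t)` over the cone `Γ(x)`, against `dy dt / t^{n+1}`. -/
def coneInt {n : ℕ} (F : En n → ℝ → ℝ) (x : En n) : ℝ≥0∞ :=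
  (∫⁻ p : En n × ℝ,
    Set.indicator {q : En n × ℝ | dist x q.1 < q.2}
      (fun q => ENNReal.ofReal (F q.1 q.2) ^ 2 / ENNReal.ofReal (q.2 ^ ((n : ℝ) + 1))) p)
    ^ (1 / 2 : ℝ)

/-- The intrinsic square function `S_γ(f)`. -/
def Sgamma {n : ℕ} (γ : ℝ) (f : En n → ℝ) (x : En n) : ℝ≥0∞ :=
  coneInt (Agamma γ f) x

/-- `(Σ_j |S_γ(f_j)(x)|²)^{1/2}`. -/
def Sl2 {n : ℕ} (γ : ℝ) (f : ℕ → En n → ℝ) (x : En n) : ℝ≥0∞ :=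
  (∑' j, Sgamma γ (f j) x ^ 2) ^ (1 / 2 : ℝ)

/-- `‖f⃗(x)‖_{ℓ²} = (Σ_j |f_j(x)|²)^{1/2}`. -/
def l2 {n : ℕ} (f : ℕ → En n → ℝ) (x : En n) : ℝ≥0∞ :=
  (∑' j, ENNReal.ofReal |f j x| ^ 2) ^ (1 / 2 : ℝ)

/-- Weighted `L^p` norm of an `ℝ≥0∞`-valued function (`p` finite). -/
def wLp {n : ℕ} (w : En n → ℝ) (p : ℝ) (g : En n → ℝ≥0∞) : ℝ≥0∞ :=
  (∫⁻ x, g x ^ p * ENNReal.ofReal (w x)) ^ (1 / p)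

/-- Weighted `L^p` norm restricted to a set. -/
def wLpOn {n : ℕ} (w : En n → ℝ) (p : ℝ) (s : Set (En n)) (g : En n → ℝ≥0∞) : ℝ≥0∞ :=
  (∫⁻ x in s, g x ^ p * ENNReal.ofReal (w x)) ^ (1 / p)

/-- Weighted weak `L^p` quasi-norm. -/
def wWeakLp {n : ℕ} (w : En n → ℝ) (p : ℝ) (g : En n → ℝ≥0∞) : ℝ≥0∞ :=
  ⨆ (lam : ℝ) (_ : 0 < lam),
    ENNReal.ofReal lam * wMeas w {x | ENNReal.ofReal lam < g x} ^ (1 / p)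

/-- Weighted weak `L^p` quasi-norm restricted to a set. -/
def wWeakLpOn {n : ℕ} (w : En n → ℝ) (p : ℝ) (s : Set (En n)) (g : En n → ℝ≥0∞) : ℝ≥0∞ :=
  ⨆ (lam : ℝ) (_ : 0 < lam),
    ENNReal.ofReal lam * wMeas w {x | x ∈ s ∧ ENNReal.ofReal lam < g x} ^ (1 / p)

/-- `L^q` norm (with exponent `q ∈ (0,∞]`, usual modification at `∞`) of an
`ℝ≥0∞`-valued function with respect to a measure. -/
def lqNorm {n : ℕ} (ν : Measure (En n)) (q : ℝ≥0∞) (F : En n → ℝ≥0∞) : ℝ≥0∞ :=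
  if q = ∞ then essSup F ν else (∫⁻ y, F y ^ q.toReal ∂ν) ^ (1 / q.toReal)

/-- The measure `μ(y) dy`. -/
def muDens {n : ℕ} (μ : En n → ℝ) : Measure (En n) :=
  volume.withDensity fun y => ENNReal.ofReal (μ y)

/-- The weighted amalgam norm `‖·‖_{(L^p,L^q)^α(w;μ)}`. -/
def amalgamNorm {n : ℕ} (w μ : En n → ℝ) (p α : ℝ) (q : ℝ≥0∞) (g : En n → ℝ≥0∞) : ℝ≥0∞ :=
  ⨆ (r : ℝ) (_ : 0 < r),
    lqNorm (muDens μ) q fun y =>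
      wMeas w (ball y r) ^ (1 / α - 1 / p - (q⁻¹).toReal) * wLpOn w p (ball y r) g

/-- The weighted weak amalgam norm `‖·‖_{(WL^p,L^q)^α(w;μ)}`. -/
def amalgamWeakNorm {n : ℕ} (w μ : En n → ℝ) (p α : ℝ) (q : ℝ≥0∞) (g : En n → ℝ≥0∞) : ℝ≥0∞ :=
  ⨆ (r : ℝ) (_ : 0 < r),
    lqNorm (muDens μ) q fun y =>
      wMeas w (ball y r) ^ (1 / α - 1 / p - (q⁻¹).toReal) * wWeakLpOn w p (ball y r) g

/-- `sup_{φ ∈ C_γ} |∫ [b(x) - b(z)] φ_t(y-z) f(z) dz|`. -/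
def AgammaComm {n : ℕ} (γ : ℝ) (b f : En n → ℝ) (x y : En n) (t : ℝ) : ℝ :=
  ⨆ φ ∈ Cfam n γ, |∫ z, (b x - b z) * dil φ t (y - z) * f z|

/-- The commutator `[b, S_γ](f)`. -/
def commS {n : ℕ} (γ : ℝ) (b f : En n → ℝ) (x : En n) : ℝ≥0∞ :=
  coneInt (AgammaComm γ b f x) x

/-- `(Σ_j |[b,S_γ](f_j)(x)|²)^{1/2}`. -/
def commSl2 {n : ℕ} (γ : ℝ) (b : En n → ℝ) (f : ℕ → En n → ℝ) (x : En n) : ℝ≥0∞ :=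
  (∑' j, commS γ b (f j) x ^ 2) ^ (1 / 2 : ℝ)

/-- Average of `b` over the ball `B(y,r)`. -/
def ballAvgF {n : ℕ} (b : En n → ℝ) (y : En n) (r : ℝ) : ℝ :=
  ⨍ x in ball y r, b x

/-- `b ∈ BMO(ℝⁿ)` with `‖b‖_* ≤ M` (over balls). -/
def IsBMOwith {n : ℕ} (b : En n → ℝ) (M : ℝ) : Prop :=
  LocallyIntegrable b volume ∧
  ∀ (y : En n) (r : ℝ), 0 < r →
    (⨍ x in ball y r, |b x - ballAvgF b y r|) ≤ M

/-- The Young function `Φ(t) = t(1 + log⁺ t)` on `ℝ≥0∞`. -/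
def PhiE (t : ℝ≥0∞) : ℝ≥0∞ :=
  t * (1 + ENNReal.ofReal (max (Real.log t.toReal) 0))

/-- Weighted Luxemburg norm `‖g‖_{L log L(w), s}`. -/
def luxLlogL {n : ℕ} (w : En n → ℝ) (s : Set (En n)) (g : En n → ℝ≥0∞) : ℝ≥0∞ :=
  sInf {c : ℝ≥0∞ | 0 < c ∧ c ≠ ∞ ∧
    (∫⁻ x in s, PhiE (g x / c) * ENNReal.ofReal (w x)) ≤ wMeas w s}

/-- The weighted amalgam norm of `L log L` type, `‖·‖_{(L log L, L^q)^α(w;μ)}`. -/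
def amalgamLlogL {n : ℕ} (w μ : En n → ℝ) (α : ℝ) (q : ℝ≥0∞) (g : En n → ℝ≥0∞) : ℝ≥0∞ :=
  ⨆ (r : ℝ) (_ : 0 < r),
    lqNorm (muDens μ) q fun y =>
      wMeas w (ball y r) ^ (1 / α - (q⁻¹).toReal) * luxLlogL w (ball y r) g

/-- The centered Hardy–Littlewood maximal function. -/
def HLmax {n : ℕ} (w : En n → ℝ) (x : En n) : ℝ≥0∞ :=
  ⨆ (r : ℝ) (_ : 0 < r), ballAvg (fun z => |w z|) x r

/-- Axis-parallel cube with center `c` and side length `L`. -/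
def cube {n : ℕ} (c : En n) (L : ℝ) : Set (En n) := {x | ∀ i, |x i - c i| ≤ L / 2}

/-- Average of `b` over the cube of center `c` and side `L`. -/
def cubeAvgF {n : ℕ} (b : En n → ℝ) (c : En n) (L : ℝ) : ℝ :=
  ⨍ x in cube c L, b x

/-- `b ∈ BMO(ℝⁿ)` with `‖b‖_* ≤ M` (over cubes). -/
def IsBMOcubeWith {n : ℕ} (b : En n → ℝ) (M : ℝ) : Prop :=
  LocallyIntegrable b volume ∧
  ∀ (c : En n) (L : ℝ), 0 < L →
    (⨍ x in cube c L, |b x - cubeAvgF b c L|) ≤ M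

/-- Weighted Luxemburg norm `‖g‖_{exp L(w), s}` for the Young function `e^t - 1`. -/
def luxExpL {n : ℕ} (w : En n → ℝ) (s : Set (En n)) (g : En n → ℝ) : ℝ≥0∞ :=
  sInf ((fun σ : ℝ => ENNReal.ofReal σ) ''
    {σ : ℝ | 0 < σ ∧
      (∫⁻ x in s, ENNReal.ofReal (Real.exp (|g x| / σ) - 1) * ENNReal.ofReal (w x))
        ≤ wMeas w s})

/-- `sup_{φ ∈ C_γ} |φ_t * g(y)|` for a complex-valued `g`. -/
def AgammaC {n : ℕ} (γ : ℝ) (g : En n → ℂ) (y : En n) (t : ℝ) : ℝ :=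
  ⨆ φ ∈ Cfam n γ, ‖∫ z, (dil φ t (y - z) : ℂ) * g z‖

/-- The intrinsic square function of a complex-valued function. -/
def SgammaC {n : ℕ} (γ : ℝ) (g : En n → ℂ) (x : En n) : ℝ≥0∞ :=
  coneInt (AgammaC γ g) x

/-!
For `x ∈ B(y,r)` and `(u,t) ∈ Γ(x)` the kernel `φ_t(u - ·)` is supported in `B̄(u,t) ⊆ B(y,2t+r)`,
and `|φ| ≤ 2^γ` (compare `φ` with its zero value at a point at distance `2` outside the unit ball).
Hence `A_γ(f^∞)(u,t)` vanishes for `t ≤ r/2` and is at most `2^γ t^{-n} ∫_{B(y,4t)} |f|`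
otherwise. Integrating over the cone, `S_γ(f^∞)(x)² ≲ ∫_{r/2}^∞ t^{-2n-1} (∫_{B(y,4t)} |f|)² dt`,
and splitting `t` into dyadic ranges `[2^l r/2, 2^{l+1} r/2)` bounds this by
`Σ_l (|B(y,2^{l+2}r)|⁻¹ ∫_{B(y,2^{l+2}r)} |f|)²`. Summing over `j`, Minkowski's inequality moves the
`ℓ²` norm inside each integral, and `(Σ_l a_l²)^{1/2} ≤ Σ_l a_l` concludes.
-/

namespace ENNReal

theorem sq_rpow_one_half (a : ℝ≥0∞) : (a ^ 2) ^ (1 / 2 : ℝ) = a := by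
  simpa using pow_rpow_inv_natCast two_ne_zero a

theorem rpow_one_half_sq (a : ℝ≥0∞) : (a ^ (1 / 2 : ℝ)) ^ 2 = a := by
  simpa using rpow_inv_natCast_pow two_ne_zero a

theorem rpow_one_half_tsum_sq_le_tsum (a : ℕ → ℝ≥0∞) :
    (∑' l, a l ^ 2) ^ (1 / 2 : ℝ) ≤ ∑' l, a l := by
  have hsq : ∑' l, a l ^ 2 ≤ (∑' l, a l) ^ 2 :=
    calc ∑' l, a l ^ 2 = ∑' l, a l * a l := by simp only [sq]
      _ ≤ ∑' l, a l * ∑' k, a k := by gcongr with l; exact ENNReal.le_tsum l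
      _ = (∑' l, a l) ^ 2 := by rw [ENNReal.tsum_mul_right, sq]
  simpa only [sq_rpow_one_half] using rpow_le_rpow hsq (by norm_num : (0 : ℝ) ≤ 1 / 2)

theorem rpow_one_half_tsum_sq_le_tsum_mul {S d J : ℕ → ℝ≥0∞} {I : ℕ → ℕ → ℝ≥0∞}
    (hS : ∀ j, S j ^ 2 ≤ ∑' l, (d l * I j l) ^ 2) (hI : ∀ l, ∑' j, I j l ^ 2 ≤ J l ^ 2) :
    (∑' j, S j ^ 2) ^ (1 / 2 : ℝ) ≤ ∑' l, d l * J l :=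
  calc (∑' j, S j ^ 2) ^ (1 / 2 : ℝ)
      ≤ (∑' l, d l ^ 2 * ∑' j, I j l ^ 2) ^ (1 / 2 : ℝ) := by
        refine rpow_le_rpow ((ENNReal.tsum_le_tsum hS).trans_eq ?_) (by norm_num)
        rw [ENNReal.tsum_comm]
        simp_rw [mul_pow, ENNReal.tsum_mul_left]
    _ ≤ (∑' l, (d l * J l) ^ 2) ^ (1 / 2 : ℝ) := by
        gcongr with l
        rw [mul_pow]
        gcongr
        exact hI l
    _ ≤ ∑' l, d l * J l := rpow_one_half_tsum_sq_le_tsum _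

end ENNReal

section Minkowski

variable {α : Type*} [MeasurableSpace α] {μ : Measure α}

theorem tsum_sq_lintegral_le_sq_lintegral_rpow_tsum_sq {b : ℕ → α → ℝ≥0∞}
    (hb : ∀ j, AEMeasurable (b j) μ) :
    ∑' j, (∫⁻ z, b j z ∂μ) ^ 2 ≤ (∫⁻ z, (∑' j, b j z ^ 2) ^ (1 / 2 : ℝ) ∂μ) ^ 2 := by
  set a : ℕ → ℝ≥0∞ := fun j => ∫⁻ z, b j z ∂μ
  set M := ∫⁻ z, (∑' j, b j z ^ 2) ^ (1 / 2 : ℝ) ∂μ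
  have hbM : ∀ j, a j ≤ M := fun j => lintegral_mono fun z =>
    calc b j z = (b j z ^ 2) ^ (1 / 2 : ℝ) := (ENNReal.sq_rpow_one_half _).symm
      _ ≤ _ := ENNReal.rpow_le_rpow (ENNReal.le_tsum j) (by norm_num)
  rw [ENNReal.tsum_eq_iSup_sum]
  refine iSup_le fun F => ?_
  set A := ∑ j ∈ F, a j ^ 2
  by_cases hA : A = ∞
  · obtain ⟨j, -, hj⟩ := ENNReal.sum_eq_top.1 hA
    have hM : M = ∞ := top_le_iff.1 ((ENNReal.pow_eq_top_iff.1 hj).1 ▸ hbM j)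
    simp [hM]
  -- Cauchy–Schwarz in `j` under the integral: `A = ∫ ∑ a_j b_j ≤ A^{1/2} M`.
  have hcs : A ≤ A ^ (1 / 2 : ℝ) * M :=
    calc A = ∫⁻ z, ∑ j ∈ F, a j * b j z ∂μ := by
          rw [lintegral_finsetSum' F fun j _ => (hb j).const_mul _]
          simp only [A, sq, lintegral_const_mul'' _ (hb _), a]
      _ ≤ ∫⁻ z, A ^ (1 / 2 : ℝ) * (∑' j, b j z ^ 2) ^ (1 / 2 : ℝ) ∂μ := by
          refine lintegral_mono fun z => ?_
          have h := ENNReal.inner_le_Lp_mul_Lq F a (fun j => b j z) Real.HolderConjugate.two_two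
          simp only [ENNReal.rpow_two] at h
          refine h.trans (mul_le_mul' le_rfl ?_)
          exact ENNReal.rpow_le_rpow (ENNReal.sum_le_tsum F) (by norm_num)
      _ = A ^ (1 / 2 : ℝ) * M := lintegral_const_mul' _ _ (by simp [hA])
  have hroot : A ^ (1 / 2 : ℝ) ≤ M := by
    rcases eq_or_ne A 0 with h0 | h0
    · simp [h0]
    refine (ENNReal.mul_le_mul_iff_right (a := A ^ (1 / 2 : ℝ)) (by simp [h0]) (by simp [hA])).1 ?_
    rwa [← sq, ENNReal.rpow_one_half_sq]
  simpa only [ENNReal.rpow_one_half_sq] using pow_le_pow_left₀ bot_le hroot 2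

end Minkowski

theorem setLIntegral_Ioi_le_tsum_dyadic {a : ℝ} (ha : 0 < a) (k : ℕ) {J : ℝ → ℝ≥0∞}
    (hJ : Monotone J) :
    ∫⁻ t in Ioi a, ENNReal.ofReal ((t ^ (k + 1))⁻¹) * J t ≤
      ∑' l : ℕ, ENNReal.ofReal (((2 ^ l * a) ^ k)⁻¹) * J (2 ^ (l + 1) * a) := by
  have hcover : Ioi a ⊆ ⋃ l : ℕ, Ico (2 ^ l * a) (2 ^ (l + 1) * a) := fun t ht => by
    obtain ⟨l, hl, hl'⟩ := exists_nat_pow_near ((one_le_div ha).2 (le_of_lt ht)) one_lt_two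
    exact mem_iUnion.2 ⟨l, (le_div_iff₀ ha).1 hl, (div_lt_iff₀ ha).1 hl'⟩
  refine (lintegral_mono_set hcover).trans <| (lintegral_iUnion_le _ _).trans <|
    ENNReal.tsum_le_tsum fun l => ?_
  set m : ℝ := 2 ^ l * a
  have hm : 0 < m := by positivity
  have h2m : 2 ^ (l + 1) * a = 2 * m := by rw [pow_succ]; ring
  calc ∫⁻ t in Ico m (2 ^ (l + 1) * a), ENNReal.ofReal ((t ^ (k + 1))⁻¹) * J t
      ≤ ∫⁻ _ in Ico m (2 ^ (l + 1) * a), ENNReal.ofReal ((m ^ (k + 1))⁻¹) * J (2 ^ (l + 1) * a) :=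
        setLIntegral_mono measurable_const fun t ht => by
          gcongr
          · exact ht.1
          · exact hJ ht.2.le
    _ = ENNReal.ofReal (((2 ^ l * a) ^ k)⁻¹) * J (2 ^ (l + 1) * a) := by
        rw [setLIntegral_const, Real.volume_Ico, h2m, mul_right_comm,
          ← ENNReal.ofReal_mul (by positivity)]
        congr 2
        field_simp
        ring

section

variable {n : ℕ} {γ : ℝ}

def unitBallVolume (n : ℕ) : ℝ := √π ^ n / Real.Gamma (n / 2 + 1)

theorem unitBallVolume_pos (n : ℕ) : 0 < unitBallVolume n :=
  div_pos (pow_pos (Real.sqrt_pos.2 Real.pi_pos) n) (Real.Gamma_pos_of_pos (by positivity))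

theorem volume_ball_eq_ofReal [Nontrivial (En n)] (x : En n) {t : ℝ} (ht : 0 ≤ t) :
    volume (ball x t) = ENNReal.ofReal (t ^ n * unitBallVolume n) := by
  rw [InnerProductSpace.volume_ball, finrank_euclideanSpace_fin, ← ENNReal.ofReal_pow ht,
    ← ENNReal.ofReal_mul (by positivity), unitBallVolume]

theorem dil_eq_zero_of_mem_Cfam {φ : En n → ℝ} (hφ : φ ∈ Cfam n γ) {t : ℝ} (ht : 0 < t) {w : En n}
    (hw : t < ‖w‖) : dil φ t w = 0 := by
  have hout : t⁻¹ • w ∉ closedBall (0 : En n) 1 := by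
    rw [mem_closedBall_zero_iff, norm_smul, norm_inv, Real.norm_of_nonneg ht.le, not_le,
      one_lt_inv_mul₀ ht]
    exact hw
  rw [dil, Function.notMem_support.1 fun h => hout (hφ.1 h), mul_zero]

theorem abs_le_of_mem_Cfam [Nontrivial (En n)] {φ : En n → ℝ} (hφ : φ ∈ Cfam n γ) (v : En n) :
    |φ v| ≤ 2 ^ γ := by
  have hvanish : ∀ w : En n, 1 < ‖w‖ → φ w = 0 := fun w hw =>
    Function.notMem_support.1 fun h => (mem_closedBall_zero_iff.1 (hφ.1 h)).not_gt hw
  obtain ⟨e, he⟩ := exists_norm_eq (En n) (zero_le_two : (0 : ℝ) ≤ 2)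
  -- `v + e` and `v - e` are `4` apart, so one of them leaves the unit ball.
  obtain ⟨w, hw, hvw⟩ : ∃ w : En n, 1 < ‖w‖ ∧ ‖v - w‖ = 2 := by
    have h4 : ‖(v + e) - (v - e)‖ = 4 := by
      rw [add_sub_sub_cancel, ← two_smul ℝ e, norm_smul, he]; norm_num
    by_cases hp : 1 < ‖v + e‖
    · exact ⟨v + e, hp, by rw [sub_add_cancel_left, norm_neg, he]⟩
    · refine ⟨v - e, ?_, by rw [sub_sub_cancel, he]⟩
      linarith [norm_sub_le (v + e) (v - e)]
  simpa [hvanish w hw, hvw] using hφ.2.2 v w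

theorem abs_dil_le_of_mem_Cfam [Nontrivial (En n)] {φ : En n → ℝ} (hφ : φ ∈ Cfam n γ) {t : ℝ}
    (ht : 0 < t) (w : En n) : |dil φ t w| ≤ 2 ^ γ * (t ^ n)⁻¹ := by
  rw [dil, abs_mul, Real.rpow_neg ht.le, Real.rpow_natCast, abs_of_pos (by positivity), mul_comm]
  exact mul_le_mul_of_nonneg_right (abs_le_of_mem_Cfam hφ _) (by positivity)

theorem ofReal_Agamma_le [Nontrivial (En n)] (g : En n → ℝ) (u : En n) {t : ℝ} (ht : 0 < t) :
    ENNReal.ofReal (Agamma γ g u t) ≤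
      ENNReal.ofReal (2 ^ γ * (t ^ n)⁻¹) * ∫⁻ z in closedBall u t, ENNReal.ofReal |g z| := by
  set M := ENNReal.ofReal (2 ^ γ * (t ^ n)⁻¹) * ∫⁻ z in closedBall u t, ENNReal.ofReal |g z|
  rcases eq_or_ne M ∞ with hM | hM
  · simp [hM]
  have hkernel : ∀ φ ∈ Cfam n γ, ∀ z, ENNReal.ofReal |dil φ t (u - z) * g z| ≤
      (closedBall u t).indicator (fun z => ENNReal.ofReal (2 ^ γ * (t ^ n)⁻¹) *
        ENNReal.ofReal |g z|) z := by
    intro φ hφ z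
    by_cases hz : z ∈ closedBall u t
    · rw [indicator_of_mem hz, abs_mul, ← ENNReal.ofReal_mul (by positivity)]
      exact ENNReal.ofReal_le_ofReal
        (mul_le_mul_of_nonneg_right (abs_dil_le_of_mem_Cfam hφ ht _) (abs_nonneg _))
    · rw [mem_closedBall, dist_comm, dist_eq_norm, not_le] at hz
      simp [dil_eq_zero_of_mem_Cfam hφ ht hz]
  refine ENNReal.ofReal_le_of_le_toReal (Real.iSup_le (fun φ => Real.iSup_le (fun hφ => ?_) ?_) ?_)
  · refine (norm_integral_le_lintegral_norm (fun z => dil φ t (u - z) * g z)).trans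
      (ENNReal.toReal_mono hM ?_)
    calc ∫⁻ z, ENNReal.ofReal ‖dil φ t (u - z) * g z‖
        ≤ ∫⁻ z, (closedBall u t).indicator (fun z => ENNReal.ofReal (2 ^ γ * (t ^ n)⁻¹) *
            ENNReal.ofReal |g z|) z := lintegral_mono (hkernel φ hφ)
      _ = M := by rw [lintegral_indicator measurableSet_closedBall,
            lintegral_const_mul' _ _ ENNReal.ofReal_ne_top]
  all_goals exact ENNReal.toReal_nonneg

theorem Sgamma_zero (γ : ℝ) (x : En n) : Sgamma γ (fun _ => 0) x = 0 := by
  simp [Sgamma, coneInt, Agamma]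

theorem closedBall_subset_ball_of_dist_lt {y x u : En n} {r t : ℝ} (hx : x ∈ ball y r)
    (hu : dist x u < t) : closedBall u t ⊆ ball y (2 * t + r) := fun z hz =>
  calc dist z y ≤ dist z u + dist u x + dist x y := dist_triangle4 _ _ _ _
    _ < t + t + r := by
        have := mem_closedBall.1 hz; have := mem_ball.1 hx; rw [dist_comm] at hu; linarith
    _ = 2 * t + r := by ring

theorem lintegral_closedBall_indicator_compl_le (f : En n → ℝ) {y x u : En n} {r t : ℝ}
    (hx : x ∈ ball y r) (hu : dist x u < t) :
    ∫⁻ z in closedBall u t, ENNReal.ofReal |(ball y (2 * r))ᶜ.indicator f z| ≤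
      (Ioi (r / 2)).indicator (fun t => ∫⁻ z in ball y (4 * t), ENNReal.ofReal |f z|) t := by
  have hsub := closedBall_subset_ball_of_dist_lt hx hu
  by_cases ht : r / 2 < t
  · rw [indicator_of_mem (mem_Ioi.2 ht)]
    calc ∫⁻ z in closedBall u t, ENNReal.ofReal |(ball y (2 * r))ᶜ.indicator f z|
        ≤ ∫⁻ z in closedBall u t, ENNReal.ofReal |f z| := by
          refine lintegral_mono fun z => ENNReal.ofReal_le_ofReal ?_
          exact norm_indicator_le_norm_self f z
      _ ≤ ∫⁻ z in ball y (4 * t), ENNReal.ofReal |f z| :=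
          lintegral_mono_set (hsub.trans (ball_subset_ball (by linarith)))
  · rw [indicator_of_notMem (by simpa using ht)]
    refine le_of_eq (setLIntegral_eq_zero measurableSet_closedBall fun z hz => ?_)
    have hz' : z ∉ (ball y (2 * r))ᶜ := not_not.2 (ball_subset_ball (by linarith) (hsub hz))
    simp [indicator_of_notMem hz']

theorem coneInt_sq_le [Nontrivial (En n)] {F : En n → ℝ → ℝ} {x : En n} {a : ℝ} (ha : 0 ≤ a)
    {h : ℝ → ℝ≥0∞} (hF : ∀ u t, dist x u < t → ENNReal.ofReal (F u t) ≤ (Ioi a).indicator h t) :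
    coneInt F x ^ 2 ≤
      ENNReal.ofReal (unitBallVolume n) * ∫⁻ t in Ioi a, h t ^ 2 / ENNReal.ofReal t := by
  set cone : Set (En n × ℝ) := {q | dist x q.1 < q.2}
  set H : ℝ → ℝ≥0∞ := fun t => (Ioi a).indicator h t ^ 2 / ENNReal.ofReal (t ^ ((n : ℝ) + 1))
  have hslice : ∀ t, ∫⁻ u, cone.indicator (fun q => H q.2) (u, t) = (Ioi a).indicator
      (fun t => ENNReal.ofReal (unitBallVolume n) * (h t ^ 2 / ENNReal.ofReal t)) t := by
    intro t
    have hball : (fun u => cone.indicator (fun q => H q.2) (u, t)) =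
        (ball x t).indicator fun _ => H t := by
      ext u; simp [cone, indicator, mem_ball, dist_comm]
    rw [hball, lintegral_indicator_const measurableSet_ball]
    by_cases ht : t ∈ Ioi a
    · have ht0 : 0 < t := ha.trans_lt ht
      have hA0 : ENNReal.ofReal (t ^ n) ≠ 0 := by simp [ht0]
      rw [indicator_of_mem ht, volume_ball_eq_ofReal x ht0.le, ENNReal.ofReal_mul (by positivity)]
      simp only [H, indicator_of_mem ht]
      rw [Real.rpow_add ht0, Real.rpow_natCast, Real.rpow_one, ENNReal.ofReal_mul (by positivity)]
      rw [ENNReal.mul_comm_div, ENNReal.mul_div_mul_left _ _ hA0 ENNReal.ofReal_ne_top]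
      simp only [div_eq_mul_inv]
      ring
    · simp [H, indicator_of_notMem ht]
  calc coneInt F x ^ 2
      = ∫⁻ p, cone.indicator (fun q => ENNReal.ofReal (F q.1 q.2) ^ 2 /
          ENNReal.ofReal (q.2 ^ ((n : ℝ) + 1))) p := by rw [coneInt, ENNReal.rpow_one_half_sq]
    _ ≤ ∫⁻ p, cone.indicator (fun q => H q.2) p := by
        refine lintegral_mono fun p => ?_
        by_cases hp : p ∈ cone
        · simp only [indicator_of_mem hp, H]
          gcongr
          exact hF p.1 p.2 hp
        · simp [indicator_of_notMem hp]
    _ = ∫⁻ q, cone.indicator (fun q => H q.2) q.swap ∂(volume.prod volume) := by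
        rw [Measure.volume_eq_prod, lintegral_prod_swap]
    -- `lintegral_prod_le` is Tonelli's inequality without any measurability assumption.
    _ ≤ ∫⁻ t, ∫⁻ u, cone.indicator (fun q => H q.2) (u, t) := lintegral_prod_le _
    _ = ENNReal.ofReal (unitBallVolume n) * ∫⁻ t in Ioi a, h t ^ 2 / ENNReal.ofReal t := by
        simp_rw [hslice]
        rw [lintegral_indicator measurableSet_Ioi, lintegral_const_mul' _ _ ENNReal.ofReal_ne_top]

def farPartConst (n : ℕ) (γ : ℝ) : ℝ := 2 ^ γ * 8 ^ n * unitBallVolume n * √(unitBallVolume n)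

theorem farPartConst_pos (n : ℕ) (γ : ℝ) : 0 < farPartConst n γ := by
  have := unitBallVolume_pos n
  unfold farPartConst
  positivity

theorem ofReal_farPartConst_mul_inv_volume_ball_sq [Nontrivial (En n)] (γ : ℝ) (y : En n)
    {m : ℝ} (hm : 0 < m) :
    (ENNReal.ofReal (farPartConst n γ) * (volume (ball y (8 * m)))⁻¹) ^ 2 =
      ENNReal.ofReal (unitBallVolume n) * ENNReal.ofReal ((2 ^ γ) ^ 2) *
        ENNReal.ofReal ((m ^ (2 * n))⁻¹) := by
  have hω := unitBallVolume_pos n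
  have hC := farPartConst_pos n γ
  rw [volume_ball_eq_ofReal y (by linarith), ← ENNReal.ofReal_inv_of_pos (by positivity),
    ← ENNReal.ofReal_mul hC.le, ← ENNReal.ofReal_pow (by positivity),
    ← ENNReal.ofReal_mul hω.le, ← ENNReal.ofReal_mul (by positivity)]
  congr 1
  rw [farPartConst, mul_pow, mul_pow, mul_pow, Real.sq_sqrt hω.le]
  field_simp
  ring

theorem Sgamma_sq_indicator_compl_ball_le_setLIntegral [Nontrivial (En n)] (f : En n → ℝ)
    {y x : En n} {r : ℝ} (hr : 0 < r) (hx : x ∈ ball y r) :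
    Sgamma γ ((ball y (2 * r))ᶜ.indicator f) x ^ 2 ≤
      ENNReal.ofReal (unitBallVolume n) * ENNReal.ofReal ((2 ^ γ) ^ 2) *
        ∫⁻ t in Ioi (r / 2), ENNReal.ofReal ((t ^ (2 * n + 1))⁻¹) *
          (∫⁻ z in ball y (4 * t), ENNReal.ofReal |f z|) ^ 2 := by
  set I : ℝ → ℝ≥0∞ := fun s => ∫⁻ z in ball y s, ENNReal.ofReal |f z|
  set c : ℝ → ℝ := fun t => 2 ^ γ * (t ^ n)⁻¹
  have hcone : Sgamma γ ((ball y (2 * r))ᶜ.indicator f) x ^ 2 ≤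
      ENNReal.ofReal (unitBallVolume n) *
        ∫⁻ t in Ioi (r / 2), (ENNReal.ofReal (c t) * I (4 * t)) ^ 2 / ENNReal.ofReal t :=
    coneInt_sq_le (by positivity) fun u t hu =>
      calc ENNReal.ofReal (Agamma γ ((ball y (2 * r))ᶜ.indicator f) u t)
          ≤ ENNReal.ofReal (c t) *
              ∫⁻ z in closedBall u t, ENNReal.ofReal |(ball y (2 * r))ᶜ.indicator f z| :=
            ofReal_Agamma_le _ u (dist_nonneg.trans_lt hu)
        _ ≤ ENNReal.ofReal (c t) * (Ioi (r / 2)).indicator (fun t => I (4 * t)) t := by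
            gcongr; exact lintegral_closedBall_indicator_compl_le f hx hu
        _ = _ := (indicator_mul_right _ (fun t => ENNReal.ofReal (c t)) _).symm
  have hradial : ∀ t ∈ Ioi (r / 2),
      (ENNReal.ofReal (c t) * I (4 * t)) ^ 2 / ENNReal.ofReal t =
        ENNReal.ofReal ((2 ^ γ) ^ 2) * (ENNReal.ofReal ((t ^ (2 * n + 1))⁻¹) * I (4 * t) ^ 2) := by
    intro t ht
    have ht0 : 0 < t := (half_pos hr).trans ht
    rw [div_eq_mul_inv, ← ENNReal.ofReal_inv_of_pos ht0, mul_pow,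
      ← ENNReal.ofReal_pow (by positivity), mul_right_comm, ← ENNReal.ofReal_mul (by positivity),
      ← mul_assoc, ← ENNReal.ofReal_mul (by positivity)]
    congr 2
    simp only [c]
    field_simp
    ring
  rw [setLIntegral_congr_fun measurableSet_Ioi hradial,
    lintegral_const_mul' _ _ ENNReal.ofReal_ne_top, ← mul_assoc] at hcone
  exact hcone

theorem Sgamma_sq_indicator_compl_ball_le [Nontrivial (En n)] (f : En n → ℝ) {y x : En n}
    {r : ℝ} (hr : 0 < r) (hx : x ∈ ball y r) :
    Sgamma γ ((ball y (2 * r))ᶜ.indicator f) x ^ 2 ≤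
      ∑' l : ℕ, (ENNReal.ofReal (farPartConst n γ) * (volume (ball y (2 ^ (l + 2) * r)))⁻¹ *
        ∫⁻ z in ball y (2 ^ (l + 2) * r), ENNReal.ofReal |f z|) ^ 2 := by
  set I : ℝ → ℝ≥0∞ := fun s => ∫⁻ z in ball y s, ENNReal.ofReal |f z|
  have hI : Monotone fun t => I (4 * t) ^ 2 := fun s s' h =>
    pow_le_pow_left₀ zero_le (lintegral_mono_set (ball_subset_ball (by linarith))) 2
  calc Sgamma γ ((ball y (2 * r))ᶜ.indicator f) x ^ 2
      ≤ ENNReal.ofReal (unitBallVolume n) * ENNReal.ofReal ((2 ^ γ) ^ 2) *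
          ∫⁻ t in Ioi (r / 2), ENNReal.ofReal ((t ^ (2 * n + 1))⁻¹) * I (4 * t) ^ 2 :=
        Sgamma_sq_indicator_compl_ball_le_setLIntegral f hr hx
    _ ≤ ENNReal.ofReal (unitBallVolume n) * ENNReal.ofReal ((2 ^ γ) ^ 2) *
          ∑' l : ℕ, ENNReal.ofReal (((2 ^ l * (r / 2)) ^ (2 * n))⁻¹) *
            I (4 * (2 ^ (l + 1) * (r / 2))) ^ 2 := by
        gcongr
        exact setLIntegral_Ioi_le_tsum_dyadic (by positivity) (2 * n) hI
    _ = _ := by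
        rw [← ENNReal.tsum_mul_left]
        refine tsum_congr fun l => ?_
        have hm : 0 < 2 ^ l * (r / 2) := by positivity
        rw [show 4 * (2 ^ (l + 1) * (r / 2)) = 8 * (2 ^ l * (r / 2)) by rw [pow_succ]; ring,
          show 2 ^ (l + 2) * r = 8 * (2 ^ l * (r / 2)) by rw [pow_add]; ring]
        generalize 2 ^ l * (r / 2) = m at hm ⊢
        rw [mul_pow _ (I (8 * m)), ofReal_farPartConst_mul_inv_volume_ball_sq γ y hm]
        ring

end

theorem vector_intrinsic_square_far_part_pointwise_general (n : ℕ) (γ : ℝ) :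
    ∃ C : ℝ, 0 < C ∧ ∀ f : ℕ → En n → ℝ,
      (∀ j, LocallyIntegrable (f j) volume) →
      ∀ (y : En n) (r : ℝ), 0 < r → ∀ x ∈ ball y r,
        Sl2 γ (fun j => (ball y (2 * r))ᶜ.indicator (f j)) x ≤
          ENNReal.ofReal C *
            ∑' l : ℕ, (volume (ball y ((2 : ℝ) ^ (l + 2) * r)))⁻¹ *
              ∫⁻ z in ball y ((2 : ℝ) ^ (l + 2) * r), l2 f z := by
  refine ⟨farPartConst n γ, farPartConst_pos n γ, fun f hf y r hr x hx => ?_⟩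
  rcases subsingleton_or_nontrivial (En n) with hsub | hnt
  · have hball : ball y (2 * r) = univ :=
      eq_univ_of_forall fun z => Subsingleton.elim y z ▸ mem_ball_self (by positivity)
    simp [Sl2, hball, Sgamma_zero]
  calc Sl2 γ (fun j => (ball y (2 * r))ᶜ.indicator (f j)) x
      ≤ ∑' l : ℕ, (ENNReal.ofReal (farPartConst n γ) * (volume (ball y (2 ^ (l + 2) * r)))⁻¹) *
          ∫⁻ z in ball y (2 ^ (l + 2) * r), l2 f z :=
        ENNReal.rpow_one_half_tsum_sq_le_tsum_mul
          (fun j => Sgamma_sq_indicator_compl_ball_le (f j) hr hx)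
          (fun l => tsum_sq_lintegral_le_sq_lintegral_rpow_tsum_sq fun j =>
            (hf j).aestronglyMeasurable.aemeasurable.abs.ennreal_ofReal.restrict)
    _ = _ := by simp_rw [← ENNReal.tsum_mul_left, mul_assoc]

/-- vector-valued pointwise bound for the far parts
`f_j^∞ = f_j · χ_{B(y,2r)^c}` on `B(y,r)`. -/
theorem vector_intrinsic_square_far_part_pointwise (n : ℕ) (γ : ℝ)
    (hγ0 : 0 < γ) (hγ1 : γ ≤ 1) :
    ∃ C : ℝ, 0 < C ∧ ∀ f : ℕ → En n → ℝ,
      (∀ j, LocallyIntegrable (f j) volume) →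
      ∀ (y : En n) (r : ℝ), 0 < r → ∀ x ∈ ball y r,
        Sl2 γ (fun j => (ball y (2 * r))ᶜ.indicator (f j)) x ≤
          ENNReal.ofReal C *
            ∑' l : ℕ, (volume (ball y ((2 : ℝ) ^ (l + 2) * r)))⁻¹ *
              ∫⁻ z in ball y ((2 : ℝ) ^ (l + 2) * r), l2 f z :=
  vector_intrinsic_square_far_part_pointwise_general n γ

end
end

section
/- Let 0<γ≤1, let b be locally integrable on ℝⁿ, let y ∈ ℝⁿ and r>0, and let f⃗=(f₁,f₂,…) be a sequence of locally integrable functions; set f_j^∞ = f_j·χ_{B(y,2r)^c}. Then there is a constant C>0, independent of b, f⃗, y, r, such that for every x ∈ B(y,r), ( Σ_{j=1}^∞ | S_γ( [b_{B(y,r)} − b] f_j^∞ )(x) |² )^{1/2} ≤ C Σ_{l=1}^∞ (1/|B(y,2^{l+1}r)|) ∫_{B(y,2^{l+1}r)} |b(z) − b_{B(y,r)}| ( Σ_{j=1}^∞ |f_j(z)|² )^{1/2} dz, where b_{B(y,r)} = (1/|B(y,r)|)∫_{B(y,r)} b. -/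
/-!
Let `g` vanish on `B(y, 2r)` and `x ∈ B(y, r)`. For `(y', t) ∈ Γ(x)` the kernel `φ_t(y' - ·)` meets
the support of `g` only when `t > r / 2`, and then only inside `B(y, 4t)`; since `|φ| ≤ 3` on `C_γ`,
`A_γ(g)(y', t) ≤ 3 t⁻ⁿ ∫_{B(y, 4t)} |g|`. Integrating over the cone and cutting `t > r / 2` into
dyadic shells `[2ˡ r/2, 2ˡ⁺¹ r/2)` gives `S_γ(g)(x)² ≲ ∑ₗ |Bₗ|⁻² (∫_{Bₗ} |g|)²` with
`Bₗ = B(y, 2ˡ⁺² r)`. For `g_j = (b_B - b) f_j^∞`, Minkowski's inequality in `ℓ²` moves the sum over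
`j` inside the integrals, and `∑ₗ aₗ² ≤ (∑ₗ aₗ)²` concludes.
-/

open MeasureTheory Metric Set
open scoped ENNReal NNReal Real

noncomputable section

namespace ENNReal

lemma rpow_one_half_pow_two (x : ℝ≥0∞) : (x ^ (1 / 2 : ℝ)) ^ 2 = x := by
  simpa [one_div] using rpow_inv_natCast_pow two_ne_zero x

lemma pow_two_rpow_one_half (x : ℝ≥0∞) : (x ^ 2) ^ (1 / 2 : ℝ) = x := by
  simpa [one_div] using pow_rpow_inv_natCast two_ne_zero x

lemma tsum_sq_le_sq_tsum {ι : Type*} (a : ι → ℝ≥0∞) : ∑' i, a i ^ 2 ≤ (∑' i, a i) ^ 2 :=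
  calc ∑' i, a i ^ 2 ≤ ∑' i, a i * ∑' k, a k :=
        ENNReal.tsum_le_tsum fun i => by rw [sq]; gcongr; exact ENNReal.le_tsum i
    _ = (∑' i, a i) ^ 2 := by rw [ENNReal.tsum_mul_right, sq]

end ENNReal

section Minkowski

variable {α : Type*} [MeasurableSpace α] {μ : Measure α}

/-- Cauchy–Schwarz applied to `q = √h · √(q² / h)`. -/
lemma lintegral_sq_le_lintegral_mul_lintegral_sq_div {q h : α → ℝ≥0∞}
    (hq : AEMeasurable q μ) (hh : AEMeasurable h μ) (h_fin : ∀ᵐ z ∂μ, h z ≠ ∞)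
    (hq_zero : ∀ z, h z = 0 → q z = 0) :
    (∫⁻ z, q z ∂μ) ^ 2 ≤ (∫⁻ z, h z ∂μ) * ∫⁻ z, q z ^ 2 / h z ∂μ := by
  have h_split : q =ᵐ[μ] fun z => h z ^ (1 / 2 : ℝ) * (q z ^ 2 / h z) ^ (1 / 2 : ℝ) := by
    filter_upwards [h_fin] with z hz
    rcases eq_or_ne (h z) 0 with h0 | h0
    · simp [h0, hq_zero z h0]
    · rw [← ENNReal.mul_rpow_of_nonneg _ _ (by norm_num), ENNReal.mul_div_cancel h0 hz,
        ENNReal.pow_two_rpow_one_half]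
  have holder := ENNReal.lintegral_mul_le_Lp_mul_Lq μ Real.HolderConjugate.two_two
    (hh.pow_const (1 / 2 : ℝ)) (((hq.pow_const 2).div hh).pow_const (1 / 2 : ℝ))
  simp only [Pi.mul_apply, ← ENNReal.rpow_mul] at holder
  norm_num at holder
  rw [lintegral_congr_ae h_split]
  calc _ ≤ ((∫⁻ z, h z ∂μ) ^ (1 / 2 : ℝ) * (∫⁻ z, q z ^ 2 / h z ∂μ) ^ (1 / 2 : ℝ)) ^ 2 :=
        pow_le_pow_left' holder 2
    _ = _ := by rw [mul_pow, ENNReal.rpow_one_half_pow_two, ENNReal.rpow_one_half_pow_two]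

lemma tsum_sq_lintegral_le_sq_lintegral {ι : Type*} [Countable ι] {q : ι → α → ℝ≥0∞}
    {h : α → ℝ≥0∞} (hq : ∀ j, AEMeasurable (q j) μ) (hh : AEMeasurable h μ)
    (hqh : ∀ z, ∑' j, q j z ^ 2 ≤ h z ^ 2) :
    ∑' j, (∫⁻ z, q j z ∂μ) ^ 2 ≤ (∫⁻ z, h z ∂μ) ^ 2 := by
  rcases eq_or_ne (∫⁻ z, h z ∂μ) ∞ with h_top | h_ne_top
  · simp [h_top]
  have hq_zero (j : ι) (z : α) (hz : h z = 0) : q j z = 0 := by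
    simpa [hz] using (ENNReal.le_tsum j).trans (hqh z)
  calc ∑' j, (∫⁻ z, q j z ∂μ) ^ 2
      ≤ ∑' j, (∫⁻ z, h z ∂μ) * ∫⁻ z, q j z ^ 2 / h z ∂μ :=
        ENNReal.tsum_le_tsum fun j => lintegral_sq_le_lintegral_mul_lintegral_sq_div (hq j) hh
          ((ae_lt_top' hh h_ne_top).mono fun _ hz => hz.ne) (hq_zero j)
    _ = (∫⁻ z, h z ∂μ) * ∫⁻ z, (∑' j, q j z ^ 2) / h z ∂μ := by
        rw [ENNReal.tsum_mul_left, ← lintegral_tsum (f := fun j z => q j z ^ 2 / h z)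
          fun j => ((hq j).pow_const 2).div hh]
        simp only [div_eq_mul_inv, ENNReal.tsum_mul_right]
    _ ≤ (∫⁻ z, h z ∂μ) * ∫⁻ z, h z ∂μ := by
        gcongr with z
        calc (∑' j, q j z ^ 2) / h z ≤ h z ^ 2 / h z := by gcongr; exact hqh z
          _ ≤ h z := by
            rcases eq_or_ne (h z) 0 with h0 | h0
            · simp [h0]
            rcases eq_or_ne (h z) ∞ with h1 | h1
            · simp [h1]
            rw [sq, ENNReal.mul_div_cancel_right h0 h1]
    _ = (∫⁻ z, h z ∂μ) ^ 2 := (sq _).symm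

end Minkowski

section Kernels

variable {n : ℕ} {γ : ℝ} {φ : En n → ℝ}

lemma eq_zero_of_mem_Cfam_of_one_lt_norm (hφ : φ ∈ Cfam n γ) {v : En n} (hv : 1 < ‖v‖) :
    φ v = 0 := by
  by_contra h
  have := hφ.1 h
  rw [mem_closedBall, dist_zero_right] at this
  linarith

/-- Compare with a point `v + e`, `‖e‖ = 3`, outside the support. -/
lemma abs_le_three_of_mem_Cfam [Nontrivial (En n)] (hγ1 : γ ≤ 1) (hφ : φ ∈ Cfam n γ)
    (v : En n) : |φ v| ≤ 3 := by
  rcases le_or_gt ‖v‖ 1 with hv | hv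
  · obtain ⟨e, he⟩ := exists_norm_eq (En n) (by norm_num : (0 : ℝ) ≤ 3)
    have h_out : φ (v + e) = 0 := by
      refine eq_zero_of_mem_Cfam_of_one_lt_norm hφ ?_
      have := norm_sub_norm_le e (-v)
      rw [norm_neg, sub_neg_eq_add, add_comm] at this
      linarith
    calc |φ v| = |φ v - φ (v + e)| := by rw [h_out, sub_zero]
      _ ≤ ‖v - (v + e)‖ ^ γ := hφ.2.2 _ _
      _ = (3 : ℝ) ^ γ := by rw [sub_add_cancel_left, norm_neg, he]
      _ ≤ (3 : ℝ) ^ (1 : ℝ) := Real.rpow_le_rpow_of_exponent_le (by norm_num) hγ1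
      _ = 3 := Real.rpow_one 3
  · simp [eq_zero_of_mem_Cfam_of_one_lt_norm hφ hv]

lemma dil_eq_zero_of_lt_norm (hφ : φ ∈ Cfam n γ) {t : ℝ} (ht : 0 < t) {u : En n}
    (hu : t < ‖u‖) : dil φ t u = 0 := by
  have : 1 < ‖t⁻¹ • u‖ := by
    rw [norm_smul, norm_inv, Real.norm_of_nonneg ht.le, inv_mul_eq_div, one_lt_div ht]
    exact hu
  rw [dil, eq_zero_of_mem_Cfam_of_one_lt_norm hφ this, mul_zero]

lemma abs_dil_le [Nontrivial (En n)] (hγ1 : γ ≤ 1) (hφ : φ ∈ Cfam n γ) {t : ℝ} (ht : 0 < t)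
    (u : En n) : |dil φ t u| ≤ 3 / t ^ n := by
  rw [dil, abs_mul, abs_of_nonneg (Real.rpow_nonneg ht.le _), Real.rpow_neg ht.le,
    Real.rpow_natCast, inv_mul_eq_div]
  gcongr
  exact abs_le_three_of_mem_Cfam hγ1 hφ _

lemma ofReal_Agamma_le_s13 {g : En n → ℝ} {y : En n} {t : ℝ} {K : ℝ≥0∞}
    (h : ∀ φ ∈ Cfam n γ, ∫⁻ z, ENNReal.ofReal (|dil φ t (y - z)| * |g z|) ≤ K) :
    ENNReal.ofReal (Agamma γ g y t) ≤ K := by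
  rcases eq_or_ne K ∞ with rfl | hK
  · exact le_top
  rw [ENNReal.ofReal_le_iff_le_toReal hK]
  refine Real.iSup_le (fun φ => Real.iSup_le (fun hφ => ?_) ENNReal.toReal_nonneg)
    ENNReal.toReal_nonneg
  calc |∫ z, dil φ t (y - z) * g z|
      ≤ (∫⁻ z, ENNReal.ofReal (|dil φ t (y - z)| * |g z|)).toReal := by
        simpa [Real.norm_eq_abs, abs_mul] using
          norm_integral_le_lintegral_norm (μ := volume) fun z => dil φ t (y - z) * g z
    _ ≤ K.toReal := ENNReal.toReal_mono hK (h φ hφ)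

end Kernels

lemma half_lt_and_dist_lt_four_mul {X : Type*} [PseudoMetricSpace X] {x y y' z : X} {r t : ℝ}
    (hx : dist x y < r) (hy' : dist x y' < t) (hz : dist y' z ≤ t) (hzy : 2 * r ≤ dist z y) :
    r / 2 < t ∧ dist z y < 4 * t := by
  have := dist_triangle4 z y' x y
  rw [dist_comm z y', dist_comm y' x] at this
  constructor <;> linarith

lemma ofReal_Agamma_le_of_support_far {n : ℕ} {γ : ℝ} (hγ1 : γ ≤ 1) {g : En n → ℝ}
    {x y y' : En n} {r t : ℝ} (hg : ∀ z, g z ≠ 0 → 2 * r ≤ dist z y) (hx : x ∈ ball y r)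
    (hy' : dist x y' < t) :
    ENNReal.ofReal (Agamma γ g y' t) ≤
      (Ioi (r / 2)).indicator (fun t => ENNReal.ofReal (3 / t ^ n)) t *
        ∫⁻ z in ball y (4 * t), ENNReal.ofReal |g z| := by
  have ht : 0 < t := dist_nonneg.trans_lt hy'
  refine ofReal_Agamma_le_s13 fun φ hφ => ?_
  have h_fin : (Ioi (r / 2)).indicator (fun t => ENNReal.ofReal (3 / t ^ n)) t ≠ ∞ := by
    unfold indicator; split_ifs <;> simp
  rw [← lintegral_indicator measurableSet_ball, ← lintegral_const_mul' _ _ h_fin]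
  refine lintegral_mono fun z => ?_
  by_cases hzero : dil φ t (y' - z) = 0 ∨ g z = 0
  · rcases hzero with h | h <;> simp [h]
  obtain ⟨h_dil, h_g⟩ := not_or.mp hzero
  have h_near : dist y' z ≤ t := by
    by_contra! h
    exact h_dil (dil_eq_zero_of_lt_norm hφ ht (by rwa [← dist_eq_norm]))
  have h_far := hg z h_g
  obtain ⟨hrt, hzy⟩ := half_lt_and_dist_lt_four_mul (mem_ball.mp hx) hy' h_near h_far
  have : Nontrivial (En n) :=
    nontrivial_of_ne z y (dist_pos.mp (by linarith [mem_ball.mp hx, dist_nonneg (x := x) (y := y)]))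
  rw [indicator_of_mem (mem_Ioi.mpr hrt), indicator_of_mem (mem_ball.mpr hzy),
    ← ENNReal.ofReal_mul (by positivity)]
  gcongr
  exact abs_dil_le hγ1 hφ ht _

lemma lintegral_indicator_cone {E : Type*} [PseudoMetricSpace E] [MeasureSpace E]
    [OpensMeasurableSpace E] [SecondCountableTopology E] [SFinite (volume : Measure E)] (x : E)
    {F : ℝ → ℝ≥0∞} (hF : Measurable F) :
    ∫⁻ p : E × ℝ, {q : E × ℝ | dist x q.1 < q.2}.indicator (fun q => F q.2) p =
      ∫⁻ t, F t * volume (ball x t) := by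
  have h_cone : MeasurableSet {q : E × ℝ | dist x q.1 < q.2} :=
    measurableSet_lt (measurable_const.dist measurable_fst) measurable_snd
  rw [Measure.volume_eq_prod, lintegral_prod_symm
    (fun p => {q : E × ℝ | dist x q.1 < q.2}.indicator (fun q => F q.2) p)
    ((hF.comp measurable_snd).indicator h_cone).aemeasurable]
  refine lintegral_congr fun t => ?_
  rw [← setLIntegral_const, ← lintegral_indicator measurableSet_ball]
  congr 1 with z
  by_cases hz : dist z x < t
  · rw [indicator_of_mem (mem_ball.mpr hz), indicator_of_mem (by rwa [dist_comm] at hz)]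
  · rw [indicator_of_notMem (by rwa [dist_comm] at hz), indicator_of_notMem (by rwa [mem_ball])]

lemma coneInt_sq_le_s13 {n : ℕ} {F : En n → ℝ → ℝ} {x : En n} {G : ℝ → ℝ≥0∞} (hG : Measurable G)
    (hF : ∀ y t, dist x y < t → ENNReal.ofReal (F y t) ≤ G t) :
    coneInt F x ^ 2 ≤
      ∫⁻ t, G t ^ 2 / ENNReal.ofReal (t ^ ((n : ℝ) + 1)) * volume (ball x t) := by
  rw [coneInt, ENNReal.rpow_one_half_pow_two, ← lintegral_indicator_cone x (by fun_prop)]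
  refine lintegral_mono fun p => ?_
  simp only [indicator_apply]
  split_ifs with hp
  · gcongr
    exact hF _ _ hp
  · exact le_rfl

lemma setLIntegral_Ioi_le_tsum_Ico {F : ℝ → ℝ≥0∞} {a : ℝ} (ha : 0 < a) :
    ∫⁻ t in Ioi a, F t ≤ ∑' l : ℕ, ∫⁻ t in Ico (2 ^ l * a) (2 * (2 ^ l * a)), F t := by
  have h_cover : Ioi a ⊆ ⋃ l : ℕ, Ico (2 ^ l * a) (2 * (2 ^ l * a)) := by
    intro t ht
    obtain ⟨l, hl, hl'⟩ := exists_nat_pow_near ((one_le_div ha).mpr (le_of_lt ht)) one_lt_two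
    refine mem_iUnion.mpr ⟨l, ?_, ?_⟩
    · exact (le_div_iff₀ ha).mp hl
    · have := (div_lt_iff₀ ha).mp hl'
      rw [pow_succ] at this
      linarith
  exact (lintegral_mono_set h_cover).trans (lintegral_iUnion_le _ _)

lemma volume_ball_eq_ofReal_pow_mul {n : ℕ} (x : En n) {t : ℝ} (ht : 0 < t) :
    volume (ball x t) = ENNReal.ofReal (t ^ n) * volume (ball (0 : En n) 1) := by
  rw [Measure.addHaar_ball_of_pos volume x ht, finrank_euclideanSpace_fin]

lemma setLIntegral_Ico_shell_le {n : ℕ} {W : ℝ → ℝ≥0∞} (hW : Monotone W) (x : En n) {s : ℝ}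
    (hs : 0 < s) :
    ∫⁻ t in Ico s (2 * s), (ENNReal.ofReal (3 / t ^ n) * W (4 * t)) ^ 2 /
        ENNReal.ofReal (t ^ ((n : ℝ) + 1)) * volume (ball x t) ≤
      ENNReal.ofReal (9 / s ^ (2 * n)) * volume (ball (0 : En n) 1) * W (8 * s) ^ 2 := by
  set κ := volume (ball (0 : En n) 1)
  calc _ ≤ ∫⁻ _ in Ico s (2 * s), ENNReal.ofReal (9 / s ^ (2 * n + 1)) * κ * W (8 * s) ^ 2 := by
        refine setLIntegral_mono' measurableSet_Ico fun t ⟨hst, hts⟩ => ?_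
        have ht : 0 < t := hs.trans_le hst
        have h_coeff : (3 / t ^ n) ^ 2 / t ^ (n + 1) * t ^ n ≤ 9 / s ^ (2 * n + 1) := by
          rw [show (3 / t ^ n) ^ 2 / t ^ (n + 1) * t ^ n = 9 / t ^ (2 * n + 1) by
            field_simp; ring]
          gcongr
        calc _ = ENNReal.ofReal ((3 / t ^ n) ^ 2 / t ^ (n + 1) * t ^ n) * κ * W (4 * t) ^ 2 := by
              have h_pow : t ^ ((n : ℝ) + 1) = t ^ (n + 1) := by norm_cast
              rw [h_pow, volume_ball_eq_ofReal_pow_mul x ht,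
                ENNReal.ofReal_mul (by positivity : (0 : ℝ) ≤ (3 / t ^ n) ^ 2 / t ^ (n + 1)),
                ENNReal.ofReal_div_of_pos (by positivity : (0 : ℝ) < t ^ (n + 1)),
                ENNReal.ofReal_pow (by positivity : (0 : ℝ) ≤ 3 / t ^ n), mul_pow]
              simp only [div_eq_mul_inv]
              ring
          _ ≤ _ := by gcongr; exact hW (by linarith)
    _ = ENNReal.ofReal (9 / s ^ (2 * n)) * κ * W (8 * s) ^ 2 := by
        rw [setLIntegral_const, Real.volume_Ico, show 2 * s - s = s by ring,
          mul_right_comm _ _ (ENNReal.ofReal s), mul_right_comm _ _ (ENNReal.ofReal s),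
          ← ENNReal.ofReal_mul (by positivity)]
        congr 3
        field_simp
        ring

/-- `farConst n ^ 2 = 9 · 64ⁿ · |B(0, 1)|³`, so that
`9 s⁻²ⁿ |B(0, 1)| = farConst n ^ 2 · |B(y, 8s)|⁻²`. -/
def farConst (n : ℕ) : ℝ := 3 * 8 ^ n * Real.sqrt (volume (ball (0 : En n) 1)).toReal ^ 3

lemma farConst_pos (n : ℕ) : 0 < farConst n := by
  have hκ := ENNReal.toReal_pos (measure_ball_pos volume (0 : En n) one_pos).ne'
    measure_ball_lt_top.ne
  unfold farConst
  positivity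

lemma ofReal_div_pow_mul_volume_ball_eq {n : ℕ} (y : En n) {s : ℝ} (hs : 0 < s) :
    ENNReal.ofReal (9 / s ^ (2 * n)) * volume (ball (0 : En n) 1) =
      ENNReal.ofReal (farConst n) ^ 2 * (volume (ball y (8 * s)))⁻¹ ^ 2 := by
  obtain ⟨k, hk, hκ⟩ : ∃ k : ℝ, 0 < k ∧ volume (ball (0 : En n) 1) = ENNReal.ofReal k :=
    ⟨_, ENNReal.toReal_pos (measure_ball_pos volume (0 : En n) one_pos).ne'
      measure_ball_lt_top.ne, (ENNReal.ofReal_toReal measure_ball_lt_top.ne).symm⟩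
  rw [farConst, volume_ball_eq_ofReal_pow_mul y (by positivity), hκ, ENNReal.toReal_ofReal hk.le,
    ← ENNReal.ofReal_mul (by positivity), ← ENNReal.ofReal_mul (by positivity),
    ← ENNReal.ofReal_inv_of_pos (by positivity), ← ENNReal.ofReal_pow (by positivity),
    ← ENNReal.ofReal_pow (by positivity), ← ENNReal.ofReal_mul (by positivity)]
  congr 1
  have h_sqrt : Real.sqrt k ^ 2 = k := Real.sq_sqrt hk.le
  field_simp
  rw [show Real.sqrt k ^ 6 = (Real.sqrt k ^ 2) ^ 3 by ring, h_sqrt]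
  ring

lemma Sgamma_sq_le_of_support_far {n : ℕ} {γ : ℝ} (hγ1 : γ ≤ 1) {g : En n → ℝ} {x y : En n}
    {r : ℝ} (hg : ∀ z, g z ≠ 0 → 2 * r ≤ dist z y) (hx : x ∈ ball y r) :
    Sgamma γ g x ^ 2 ≤ ∑' l : ℕ, ENNReal.ofReal (farConst n) ^ 2 *
      (volume (ball y (2 ^ (l + 2) * r)))⁻¹ ^ 2 *
        (∫⁻ z in ball y (2 ^ (l + 2) * r), ENNReal.ofReal |g z|) ^ 2 := by
  have hr : 0 < r := dist_nonneg.trans_lt (mem_ball.mp hx)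
  set W : ℝ → ℝ≥0∞ := fun u => ∫⁻ z in ball y u, ENNReal.ofReal |g z|
  have hW : Monotone W := fun _ _ h => lintegral_mono_set (ball_subset_ball h)
  have hG : Measurable fun t => (Ioi (r / 2)).indicator (fun t => ENNReal.ofReal (3 / t ^ n)) t *
      W (4 * t) :=
    ((by fun_prop : Measurable fun t : ℝ => ENNReal.ofReal (3 / t ^ n)).indicator
      measurableSet_Ioi).mul (hW.measurable.comp (measurable_const_mul 4))
  calc Sgamma γ g x ^ 2
      ≤ ∫⁻ t, ((Ioi (r / 2)).indicator (fun t => ENNReal.ofReal (3 / t ^ n)) t * W (4 * t)) ^ 2 /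
          ENNReal.ofReal (t ^ ((n : ℝ) + 1)) * volume (ball x t) :=
        coneInt_sq_le_s13 hG fun _ _ hy' => ofReal_Agamma_le_of_support_far hγ1 hg hx hy'
    _ = ∫⁻ t in Ioi (r / 2), (ENNReal.ofReal (3 / t ^ n) * W (4 * t)) ^ 2 /
          ENNReal.ofReal (t ^ ((n : ℝ) + 1)) * volume (ball x t) := by
        rw [← lintegral_indicator measurableSet_Ioi]
        congr 1 with t
        by_cases ht : t ∈ Ioi (r / 2)
        · rw [indicator_of_mem ht, indicator_of_mem ht]
        · simp [indicator_of_notMem ht]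
    _ ≤ ∑' l : ℕ, ∫⁻ t in Ico (2 ^ l * (r / 2)) (2 * (2 ^ l * (r / 2))),
          (ENNReal.ofReal (3 / t ^ n) * W (4 * t)) ^ 2 /
            ENNReal.ofReal (t ^ ((n : ℝ) + 1)) * volume (ball x t) :=
        setLIntegral_Ioi_le_tsum_Ico (by positivity)
    _ ≤ ∑' l : ℕ, ENNReal.ofReal (9 / (2 ^ l * (r / 2)) ^ (2 * n)) *
          volume (ball (0 : En n) 1) * W (8 * (2 ^ l * (r / 2))) ^ 2 :=
        ENNReal.tsum_le_tsum fun l => setLIntegral_Ico_shell_le hW x (by positivity)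
    _ = _ := by
        refine tsum_congr fun l => ?_
        rw [ofReal_div_pow_mul_volume_ball_eq y (by positivity),
          show 8 * (2 ^ l * (r / 2)) = 2 ^ (l + 2) * r by ring]

lemma tsum_sq_ofReal_abs_mul_indicator_le {n : ℕ} (a : En n → ℝ) (s : Set (En n))
    (f : ℕ → En n → ℝ) (z : En n) :
    ∑' j, ENNReal.ofReal |a z * s.indicator (f j) z| ^ 2 ≤ (ENNReal.ofReal |a z| * l2 f z) ^ 2 := by
  rw [mul_pow, l2, ENNReal.rpow_one_half_pow_two, ← ENNReal.tsum_mul_left]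
  gcongr with j
  rw [abs_mul, ENNReal.ofReal_mul (abs_nonneg _), mul_pow]
  gcongr ENNReal.ofReal |a z| ^ 2 * ENNReal.ofReal ?_ ^ 2
  simpa [Real.norm_eq_abs] using norm_indicator_le_norm_self (f j) z

theorem vector_intrinsic_square_bmo_far_part_pointwise_general (n : ℕ) (γ : ℝ)
    (hγ1 : γ ≤ 1) :
    ∃ C : ℝ, 0 < C ∧ ∀ (b : En n → ℝ), LocallyIntegrable b volume →
      ∀ f : ℕ → En n → ℝ, (∀ j, LocallyIntegrable (f j) volume) →
      ∀ (y : En n) (r : ℝ), 0 < r → ∀ x ∈ ball y r,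
        Sl2 γ (fun j z =>
            (ballAvgF b y r - b z) * (ball y (2 * r))ᶜ.indicator (f j) z) x ≤
          ENNReal.ofReal C *
            ∑' l : ℕ, (volume (ball y ((2 : ℝ) ^ (l + 2) * r)))⁻¹ *
              ∫⁻ z in ball y ((2 : ℝ) ^ (l + 2) * r),
                ENNReal.ofReal |b z - ballAvgF b y r| * l2 f z := by
  refine ⟨farConst n, farConst_pos n, fun b hb f hf y r _ x hx => ?_⟩
  set c := ballAvgF b y r
  set g : ℕ → En n → ℝ := fun j z => (c - b z) * (ball y (2 * r))ᶜ.indicator (f j) z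
  set B : ℕ → Set (En n) := fun l => ball y (2 ^ (l + 2) * r)
  have hg_far (j : ℕ) (z : En n) (hz : g j z ≠ 0) : 2 * r ≤ dist z y := by
    simpa using (mem_of_indicator_ne_zero (right_ne_zero_of_mul hz) : z ∈ (ball y (2 * r))ᶜ)
  have hg_meas (j : ℕ) : AEMeasurable (fun z => ENNReal.ofReal |g j z|) volume :=
    ((aemeasurable_const.sub hb.aestronglyMeasurable.aemeasurable).mul
      ((hf j).aestronglyMeasurable.aemeasurable.indicator measurableSet_ball.compl)).abs
      |>.ennreal_ofReal
  have hh_meas : AEMeasurable (fun z => ENNReal.ofReal |b z - c| * l2 f z) volume :=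
    (hb.aestronglyMeasurable.aemeasurable.sub_const c).abs.ennreal_ofReal.mul
      ((AEMeasurable.tsum fun j =>
        ((hf j).aestronglyMeasurable.aemeasurable.abs.ennreal_ofReal.pow_const 2)).pow_const _)
  have hg_sq (z : En n) :
      ∑' j, ENNReal.ofReal |g j z| ^ 2 ≤ (ENNReal.ofReal |b z - c| * l2 f z) ^ 2 := by
    rw [abs_sub_comm]
    exact tsum_sq_ofReal_abs_mul_indicator_le (fun z => c - b z) _ f z
  rw [Sl2, ← ENNReal.pow_two_rpow_one_half (_ * _)]
  gcongr
  calc ∑' j, Sgamma γ (g j) x ^ 2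
      ≤ ∑' j, ∑' l, ENNReal.ofReal (farConst n) ^ 2 * (volume (B l))⁻¹ ^ 2 *
          (∫⁻ z in B l, ENNReal.ofReal |g j z|) ^ 2 :=
        ENNReal.tsum_le_tsum fun j => Sgamma_sq_le_of_support_far hγ1 (hg_far j) hx
    _ = ∑' l, ENNReal.ofReal (farConst n) ^ 2 * (volume (B l))⁻¹ ^ 2 *
          ∑' j, (∫⁻ z in B l, ENNReal.ofReal |g j z|) ^ 2 := by
        rw [ENNReal.tsum_comm]
        simp only [ENNReal.tsum_mul_left]
    _ ≤ ∑' l, ENNReal.ofReal (farConst n) ^ 2 * (volume (B l))⁻¹ ^ 2 *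
          (∫⁻ z in B l, ENNReal.ofReal |b z - c| * l2 f z) ^ 2 := by
        gcongr with l
        exact tsum_sq_lintegral_le_sq_lintegral (fun j => (hg_meas j).restrict)
          hh_meas.restrict hg_sq
    _ = ENNReal.ofReal (farConst n) ^ 2 *
          ∑' l, ((volume (B l))⁻¹ * ∫⁻ z in B l, ENNReal.ofReal |b z - c| * l2 f z) ^ 2 := by
        simp only [mul_pow, mul_assoc, ENNReal.tsum_mul_left]
    _ ≤ _ := by
        rw [mul_pow]
        gcongr
        exact ENNReal.tsum_sq_le_sq_tsum _

/-- vector-valued pointwise bound for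
`S_γ([b_{B(y,r)} - b] f_j^∞)` on `B(y,r)`. -/
theorem vector_intrinsic_square_bmo_far_part_pointwise (n : ℕ) (γ : ℝ)
    (hγ0 : 0 < γ) (hγ1 : γ ≤ 1) :
    ∃ C : ℝ, 0 < C ∧ ∀ (b : En n → ℝ), LocallyIntegrable b volume →
      ∀ f : ℕ → En n → ℝ, (∀ j, LocallyIntegrable (f j) volume) →
      ∀ (y : En n) (r : ℝ), 0 < r → ∀ x ∈ ball y r,
        Sl2 γ (fun j z =>
            (ballAvgF b y r - b z) * (ball y (2 * r))ᶜ.indicator (f j) z) x ≤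
          ENNReal.ofReal C *
            ∑' l : ℕ, (volume (ball y ((2 : ℝ) ^ (l + 2) * r)))⁻¹ *
              ∫⁻ z in ball y ((2 : ℝ) ^ (l + 2) * r),
                ENNReal.ofReal |b z - ballAvgF b y r| * l2 f z :=
  vector_intrinsic_square_bmo_far_part_pointwise_general n γ hγ1

end
end
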